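/- arXiv:2603.18511 — 2 statements merged into one kernel-verified Lean document; each statement's English description precedes it below -/
import Mathlib

section
/- Assume n = Σ_i d_i² n_i ≥ 2 and set m = Σ_i d_i n_i. Then the number of x ∈ B* with Tr_B(x) = 0 equals ( |B*| + (−1)^{Σ_i d_i} (q−1) q^{(n−m)/2} ) / q. -/
/-!
With a primitive additive character `ψ` of `F = 𝔽_q`, `q · #{x ∈ B* | Tr_B x = 0}` equals
`∑_{t ∈ F} ∑_{x ∈ B*} ψ (t · Tr_B x)`. The term `t = 0` contributes `|B*|`. For `t ≠ 0` the inner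
sum factors over the components into sums `∑_{u ∈ GL_d(K)} χ (tr u)` for the nontrivial character
`χ = ψ (t · Tr_{K/F} ·)` of `K`, and each of these equals `(-1)^d |K|^(d choose 2)`.

This last evaluation is by induction on `d`, writing a matrix of size `d + 1` as a bordered matrix
`[[B, x], [yᵀ, a]]`. If `B` is singular the determinant does not depend on the corner `a`, so the
sum over `a` vanishes. If `B` is invertible the determinant vanishes for exactly one `a`, and what
is left is `-χ (tr B) ∑_{x,y} χ (y ⬝ B⁻¹ x) = -|K|^d χ (tr B)`.
-/

open Matrix Finset

lemma AddChar.map_sum_eq_prod {A M ι : Type*} [AddCommMonoid A] [CommMonoid M] (ψ : AddChar A M)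
    (s : Finset ι) (f : ι → A) : ψ (∑ i ∈ s, f i) = ∏ i ∈ s, ψ (f i) := by
  classical
  induction s using Finset.induction with
  | empty => simp
  | insert _ _ ha ih => rw [sum_insert ha, prod_insert ha, ψ.map_add_eq_mul, ih]

lemma AddChar.sum_pi_map_sum {A M ι : Type*} [AddCommMonoid A] [CommSemiring M] [Fintype ι]
    [DecidableEq ι] {X : ι → Type*} [∀ i, Fintype (X i)] (ψ : AddChar A M) (g : ∀ i, X i → A) :
    ∑ x : ∀ i, X i, ψ (∑ i, g i (x i)) = ∏ i, ∑ u, ψ (g i u) := by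
  simp_rw [ψ.map_sum_eq_prod, Fintype.prod_sum]

lemma AddChar.compAddMonoidHom_ne_one {A B M : Type*} [AddMonoid A] [AddMonoid B] [Monoid M]
    {ψ : AddChar B M} (hψ : ψ ≠ 1) {f : A →+ B} (hf : Function.Surjective f) :
    ψ.compAddMonoidHom f ≠ 1 := fun h =>
  hψ (compAddMonoidHom_injective_left f hf (h.trans rfl))

section Orthogonality

variable {R : Type*} [CommRing R] [IsDomain R]

lemma AddChar.sum_dotProduct {K ι : Type*} [Field K] [Fintype K] [DecidableEq K] [Fintype ι]
    [DecidableEq ι] {χ : AddChar K R} (hχ : χ ≠ 1) (w : ι → K) :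
    ∑ v : ι → K, χ (v ⬝ᵥ w) = if w = 0 then (Fintype.card K : R) ^ Fintype.card ι else 0 := by
  have hsum (i : ι) : ∑ s : K, χ (s * w i) = if w i = 0 then (Fintype.card K : R) else 0 :=
    mod_cast AddChar.sum_mulShift _ (AddChar.IsPrimitive.of_ne_one hχ)
  refine (χ.sum_pi_map_sum fun i s => s * w i).trans ?_
  simp_rw [hsum]
  rw [prod_ite_zero]
  simp [funext_iff]

lemma AddChar.card_mul_card_filter_eq_zero {F X : Type*} [CommRing F] [Fintype F] [DecidableEq F]
    [Fintype X] {ψ : AddChar F R} (hψ : ψ.IsPrimitive) (f : X → F) :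
    (Fintype.card F : R) * #{x | f x = 0} = ∑ t : F, ∑ x, ψ (t * f x) := by
  rw [sum_comm]
  simp_rw [AddChar.sum_mulShift _ hψ]
  rw [← Nat.cast_sum, ← Nat.cast_mul, sum_ite, sum_const_zero, add_zero, sum_const, smul_eq_mul,
    mul_comm]

lemma AddChar.sum_add_left_eq_zero {K : Type*} [AddGroup K] [Fintype K] {χ : AddChar K R}
    (hχ : χ ≠ 1) (b : K) : ∑ a, χ (b + a) = 0 := by
  simp_rw [χ.map_add_eq_mul, ← mul_sum, χ.sum_eq_zero_of_ne_one hχ, mul_zero]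

lemma AddChar.sum_ite_add_left_eq_neg {K : Type*} [AddGroup K] [Fintype K] [DecidableEq K]
    {χ : AddChar K R} (hχ : χ ≠ 1) (b c : K) :
    ∑ a, (if a = c then 0 else χ (b + a)) = -χ (b + c) := by
  have hsplit (a : K) :
      (if a = c then 0 else χ (b + a)) = χ (b + a) - if a = c then χ (b + a) else 0 := by
    split_ifs <;> simp
  simp_rw [hsplit, sum_sub_distrib, sum_ite_eq', mem_univ, if_true, χ.sum_add_left_eq_zero hχ,
    zero_sub]

end Orthogonality

section Bordered

variable {α n : Type*}

def borderedMatrix (B : Matrix n n α) (x y : n → α) (a : α) : Matrix (n ⊕ Unit) (n ⊕ Unit) α :=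
  fromBlocks B (replicateCol Unit x) (replicateRow Unit y) (of fun _ _ => a)

def borderedEquiv : Matrix n n α × (n → α) × (n → α) × α ≃ Matrix (n ⊕ Unit) (n ⊕ Unit) α where
  toFun p := borderedMatrix p.1 p.2.1 p.2.2.1 p.2.2.2
  invFun M := (M.toBlocks₁₁, fun i => M (.inl i) (.inr ()), fun j => M (.inr ()) (.inl j),
    M (.inr ()) (.inr ()))
  left_inv _ := rfl
  right_inv M := by ext (i | i) (j | j) <;> rfl

lemma sum_eq_sum_borderedMatrix {M : Type*} [AddCommMonoid M] [Fintype n] [DecidableEq n]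
    [Fintype α] (f : Matrix (n ⊕ Unit) (n ⊕ Unit) α → M) :
    ∑ A, f A = ∑ B, ∑ x, ∑ y, ∑ a, f (borderedMatrix B x y a) := by
  simp only [← borderedEquiv.sum_comp f, Fintype.sum_prod_type]
  rfl

variable [CommRing α] [Fintype n] (B : Matrix n n α) (x y : n → α) (a : α)

lemma trace_borderedMatrix : (borderedMatrix B x y a).trace = B.trace + a := by
  simp [borderedMatrix, trace, Fintype.sum_sum_type]

variable [DecidableEq n]

lemma det_borderedMatrix :
    (borderedMatrix B x y a).det = (borderedMatrix B x y 0).det + a * B.det := by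
  have hrow : borderedMatrix B x y a = (borderedMatrix B x y 0).updateRow (.inr ())
      (borderedMatrix B x y 0 (.inr ()) + Pi.single (.inr ()) a) := by
    ext i (j | j) <;> rcases i with i | i <;> simp [borderedMatrix, updateRow_apply]
  have hcorner : (borderedMatrix B x y 0).updateRow (.inr ()) (Pi.single (.inr ()) a)
      = fromBlocks B (replicateCol Unit x) 0 (of fun _ _ => a) := by
    ext i (j | j) <;> rcases i with i | i <;> simp [borderedMatrix, updateRow_apply]
  rw [hrow, det_updateRow_add, updateRow_eq_self, hcorner, det_fromBlocks_zero₂₁,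
    det_unique (of fun _ _ => a : Matrix Unit Unit α), mul_comm]
  rfl

lemma det_borderedMatrix_of_isUnit (hB : IsUnit B.det) :
    (borderedMatrix B x y a).det = B.det * (a - y ⬝ᵥ (B⁻¹ *ᵥ x)) := by
  have := B.invertibleOfIsUnitDet hB
  rw [borderedMatrix, det_fromBlocks₁₁, det_unique (_ : Matrix Unit Unit α), invOf_eq_nonsing_inv,
    dotProduct_mulVec]
  simp [mul_apply, dotProduct, vecMul]

end Bordered

lemma trace_reindex {α m n : Type*} [AddCommMonoid α] [Fintype m] [Fintype n] (e : m ≃ n)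
    (A : Matrix m m α) : (reindex e e A).trace = A.trace :=
  Fintype.sum_equiv e.symm _ _ fun _ => rfl

lemma Units.sum_val_eq_sum_ite {M β : Type*} [Monoid M] [Fintype M] [Fintype Mˣ]
    [DecidablePred (IsUnit : M → Prop)] [AddCommMonoid β] (f : M → β) :
    ∑ u : Mˣ, f u = ∑ a, if IsUnit a then f a else 0 := by
  rw [← sum_filter]
  exact sum_bij (fun u _ => u) (fun u _ => by simp) (fun _ _ _ _ => Units.ext)
    (fun a ha => ⟨(by simpa using ha : IsUnit a).unit, mem_univ _, rfl⟩) fun _ _ => rfl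

section GaussSum

variable {K R : Type*} [Field K] [Fintype K] [DecidableEq K] [CommRing R]
  {χ : AddChar K R} {n : Type*} [Fintype n] [DecidableEq n]

lemma sum_GL_eq_sum_det_ne_zero {M : Type*} [AddCommMonoid M] (f : Matrix n n K → M) :
    ∑ u : GL n K, f u = ∑ A : Matrix n n K, if A.det = 0 then 0 else f A := by
  rw [Units.sum_val_eq_sum_ite]
  simp_rw [isUnit_iff_isUnit_det, isUnit_iff_ne_zero, ite_not]

lemma sum_det_ne_zero_reindex {m : Type*} [Fintype m] [DecidableEq m] (e : m ≃ n) :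
    ∑ A : Matrix m m K, (if A.det = 0 then 0 else χ A.trace)
      = ∑ A : Matrix n n K, (if A.det = 0 then 0 else χ A.trace) := by
  simp only [← (reindex e e).sum_comp, det_reindex_self, trace_reindex]

variable [IsDomain R] (B : Matrix n n K)

lemma sum_borderedMatrix_of_det_eq_zero (hχ : χ ≠ 1) (hB : B.det = 0) (x y : n → K) :
    ∑ a, (if (borderedMatrix B x y a).det = 0 then 0 else χ (B.trace + a)) = 0 := by
  have hconst (a : K) : (borderedMatrix B x y a).det = (borderedMatrix B x y 0).det := by
    rw [det_borderedMatrix, hB, mul_zero, add_zero]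
  by_cases h : (borderedMatrix B x y 0).det = 0
  · exact sum_eq_zero fun a _ => if_pos ((hconst a).trans h)
  · rw [← χ.sum_add_left_eq_zero hχ B.trace]
    exact sum_congr rfl fun a _ => if_neg (by rwa [hconst])

lemma sum_borderedMatrix_of_det_ne_zero (hχ : χ ≠ 1) (hB : B.det ≠ 0) :
    ∑ x, ∑ y, ∑ a, (if (borderedMatrix B x y a).det = 0 then 0 else χ (B.trace + a))
      = -((Fintype.card K : R) ^ Fintype.card n * χ B.trace) := by
  have hinner (x y : n → K) :
      ∑ a, (if (borderedMatrix B x y a).det = 0 then 0 else χ (B.trace + a))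
        = -(χ B.trace * χ (y ⬝ᵥ (B⁻¹ *ᵥ x))) := by
    simp_rw [det_borderedMatrix_of_isUnit B x y _ (isUnit_iff_ne_zero.2 hB), mul_eq_zero, hB,
      false_or, sub_eq_zero]
    rw [χ.sum_ite_add_left_eq_neg hχ, χ.map_add_eq_mul]
  have hbij : Function.Bijective (B⁻¹ *ᵥ ·) := by
    have hB' : IsUnit B⁻¹ :=
      isUnit_nonsing_inv_iff.2 ((isUnit_iff_isUnit_det B).2 (isUnit_iff_ne_zero.2 hB))
    exact ⟨mulVec_injective_iff_isUnit.2 hB', mulVec_surjective_iff_isUnit.2 hB'⟩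
  calc _ = -(χ B.trace * ∑ x, ∑ y, χ (y ⬝ᵥ (B⁻¹ *ᵥ x))) := by
        simp_rw [hinner, mul_sum, sum_neg_distrib]
    _ = -(χ B.trace * ∑ x, ∑ y, χ (y ⬝ᵥ x)) := by
        rw [hbij.sum_comp fun x => ∑ y, χ (y ⬝ᵥ x)]
    _ = _ := by
        simp_rw [AddChar.sum_dotProduct hχ, sum_ite_eq', mem_univ, if_true, mul_comm]

variable (χ) in
lemma sum_det_ne_zero_sumUnit (hχ : χ ≠ 1) :
    ∑ A : Matrix (n ⊕ Unit) (n ⊕ Unit) K, (if A.det = 0 then 0 else χ A.trace)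
      = -(Fintype.card K : R) ^ Fintype.card n *
          ∑ B : Matrix n n K, (if B.det = 0 then 0 else χ B.trace) := by
  simp_rw [sum_eq_sum_borderedMatrix, trace_borderedMatrix, mul_sum]
  refine sum_congr rfl fun B _ => ?_
  by_cases hB : B.det = 0
  · simp [hB, sum_borderedMatrix_of_det_eq_zero B hχ hB]
  · rw [sum_borderedMatrix_of_det_ne_zero B hχ hB, if_neg hB]
    ring

variable (χ) in
lemma sum_det_ne_zero_addChar_trace_fin (hχ : χ ≠ 1) (d : ℕ) :
    ∑ A : Matrix (Fin d) (Fin d) K, (if A.det = 0 then 0 else χ A.trace)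
      = (-1) ^ d * (Fintype.card K : R) ^ d.choose 2 := by
  induction d with
  | zero =>
    have : Unique (Matrix (Fin 0) (Fin 0) K) := Pi.uniqueOfIsEmpty _
    simp [trace]
  | succ d ih =>
    rw [← sum_det_ne_zero_reindex
        ((Equiv.sumCongr (.refl _) finOneEquiv.symm).trans finSumFinEquiv),
      sum_det_ne_zero_sumUnit χ hχ, ih, Fintype.card_fin, Nat.choose_succ_succ',
      Nat.choose_one_right, pow_add]
    ring

theorem sum_GL_addChar_trace (hχ : χ ≠ 1) :
    ∑ u : GL n K, χ (u : Matrix n n K).trace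
      = (-1) ^ Fintype.card n * (Fintype.card K : R) ^ (Fintype.card n).choose 2 := by
  rw [sum_GL_eq_sum_det_ne_zero fun A => χ A.trace,
    ← sum_det_ne_zero_reindex (Fintype.equivFin n).symm, sum_det_ne_zero_addChar_trace_fin χ hχ]

end GaussSum

lemma sq_eq_add_two_mul_choose_two (d : ℕ) : d ^ 2 = d + 2 * d.choose 2 := by
  induction d with
  | zero => rfl
  | succ d ih =>
    rw [Nat.choose_succ_succ', Nat.choose_one_right]
    linarith

lemma sum_mul_choose_two {ι : Type*} (s : Finset ι) (d e : ι → ℕ) :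
    ∑ i ∈ s, e i * (d i).choose 2 = (∑ i ∈ s, d i ^ 2 * e i - ∑ i ∈ s, d i * e i) / 2 := by
  simp_rw [sq_eq_add_two_mul_choose_two, add_mul, sum_add_distrib, add_tsub_cancel_left,
    mul_assoc 2, ← mul_sum, Nat.mul_div_cancel_left _ two_pos, mul_comm]

lemma AddChar.mulShift_compAddMonoidHom_trace_ne_one {F R : Type*} [Field F] [Fintype F]
    [CommRing R] {ψ : AddChar F R} (K : Type*) [Field K] [Fintype K]
    [Algebra F K] (hψ : ψ.IsPrimitive) {t : F} (ht : t ≠ 0) :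
    (ψ.mulShift t).compAddMonoidHom (Algebra.trace F K).toAddMonoidHom ≠ 1 :=
  have : FiniteDimensional F K := .of_finite
  compAddMonoidHom_ne_one (hψ ht) (Algebra.trace_surjective F K)

theorem card_mul_card_pi_GL_trace_eq_zero {F R : Type*} [Field F] [Fintype F] [DecidableEq F]
    [CommRing R] [IsDomain R] {ψ : AddChar F R} (hψ : ψ.IsPrimitive) {ι : Type*} [Fintype ι]
    [DecidableEq ι] (n K : ι → Type*) [∀ i, Fintype (n i)] [∀ i, DecidableEq (n i)]
    [∀ i, Field (K i)] [∀ i, Fintype (K i)] [∀ i, DecidableEq (K i)] [∀ i, Algebra F (K i)] :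
    (Fintype.card F : R) *
        #{x : ∀ i, GL (n i) (K i) | ∑ i, Algebra.trace F (K i) (x i).val.trace = 0}
      = Fintype.card (∀ i, GL (n i) (K i)) + (Fintype.card F - 1) * ∏ i,
          (-1) ^ Fintype.card (n i) * (Fintype.card (K i) : R) ^ (Fintype.card (n i)).choose 2 := by
  have hfactor (t : F) :
      ∑ x : ∀ i, GL (n i) (K i), ψ (t * ∑ i, Algebra.trace F (K i) (x i).val.trace)
        = ∏ i, ∑ u : GL (n i) (K i), ψ (t * Algebra.trace F (K i) u.val.trace) := by
    simp_rw [mul_sum]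
    exact ψ.sum_pi_map_sum fun i (u : GL (n i) (K i)) => t * Algebra.trace F (K i) u.val.trace
  have hGauss (t : F) (ht : t ≠ 0) (i : ι) :
      ∑ u : GL (n i) (K i), ψ (t * Algebra.trace F (K i) u.val.trace)
        = (-1) ^ Fintype.card (n i) * (Fintype.card (K i) : R) ^ (Fintype.card (n i)).choose 2 :=
    sum_GL_addChar_trace (ψ.mulShift_compAddMonoidHom_trace_ne_one (K i) hψ ht)
  have hzero : ∏ i, ∑ u : GL (n i) (K i), ψ (0 * Algebra.trace F (K i) u.val.trace)
      = Fintype.card (∀ i, GL (n i) (K i)) := by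
    simp [Fintype.card_pi]
  rw [ψ.card_mul_card_filter_eq_zero hψ, ← add_sum_erase _ _ (mem_univ 0)]
  simp_rw [hfactor]
  rw [hzero, sum_congr rfl fun t ht => prod_congr rfl fun i _ => hGauss t (ne_of_mem_erase ht) i,
    sum_const, card_erase_of_mem (mem_univ 0), card_univ, nsmul_eq_mul,
    Nat.cast_pred Fintype.card_pos]

theorem stmt_9_general (q : ℕ) (F : Type) [Field F] [Fintype F] (hF : Fintype.card F = q)
    (k : ℕ) (d nn : Fin k → ℕ)
    (K : Fin k → Type) [∀ i, Field (K i)] [∀ i, Algebra F (K i)] [∀ i, Fintype (K i)]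
    (hK : ∀ i, Module.finrank F (K i) = nn i)
    (n : ℕ) (hn : n = ∑ i, d i ^ 2 * nn i)
    (m : ℕ) (hm : m = ∑ i, d i * nn i) :
    (Nat.card {x : ∀ i, GL (Fin (d i)) (K i) //
          (∑ i, Algebra.trace F (K i) (x i : Matrix (Fin (d i)) (Fin (d i)) (K i)).trace) = 0} : ℝ)
      = ((Nat.card (∀ i, GL (Fin (d i)) (K i)) : ℝ)
          + (-1 : ℝ) ^ (∑ i, d i) * ((q : ℝ) - 1) * (q : ℝ) ^ ((n - m) / 2)) / q := by
  classical
  obtain ⟨ψ, hψ⟩ : ∃ ψ : AddChar F ℂ, ψ.IsPrimitive :=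
    ⟨_, AddChar.FiniteField.primitiveChar_to_Complex_isPrimitive F⟩
  have hcardK (i : Fin k) : Fintype.card (K i) = q ^ nn i := by
    rw [Module.card_eq_pow_finrank (K := F), hF, hK i]
  have key := card_mul_card_pi_GL_trace_eq_zero hψ (fun i => Fin (d i)) K
  simp only [Fintype.card_fin, hcardK, hF, prod_mul_distrib, prod_pow_eq_pow_sum, Nat.cast_pow,
    ← pow_mul] at key
  rw [sum_mul_choose_two, ← hn, ← hm] at key
  have hq : (q : ℝ) ≠ 0 := by rw [← hF]; exact_mod_cast Fintype.card_ne_zero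
  rw [eq_div_iff hq, Nat.card_eq_fintype_card, Nat.card_eq_fintype_card, Fintype.card_subtype]
  apply Complex.ofReal_injective
  push_cast
  linear_combination key

theorem stmt_9 (q : ℕ) (F : Type) [Field F] [Fintype F] (hF : Fintype.card F = q)
    (k : ℕ) (hk : 0 < k) (d nn : Fin k → ℕ) (hd : ∀ i, 0 < d i) (hnn : ∀ i, 0 < nn i)
    (K : Fin k → Type) [∀ i, Field (K i)] [∀ i, Algebra F (K i)] [∀ i, Fintype (K i)]
    (hK : ∀ i, Module.finrank F (K i) = nn i)
    (n : ℕ) (hn : n = ∑ i, d i ^ 2 * nn i) (hn2 : 2 ≤ n)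
    (m : ℕ) (hm : m = ∑ i, d i * nn i) :
    (Nat.card {x : ∀ i, GL (Fin (d i)) (K i) //
          (∑ i, Algebra.trace F (K i) (x i : Matrix (Fin (d i)) (Fin (d i)) (K i)).trace) = 0} : ℝ)
      = ((Nat.card (∀ i, GL (Fin (d i)) (K i)) : ℝ)
          + (-1 : ℝ) ^ (∑ i, d i) * ((q : ℝ) - 1) * (q : ℝ) ^ ((n - m) / 2)) / q :=
  stmt_9_general q F hF k d nn K hK n hn m hm
end

section
/- Let ψ be a nontrivial additive character of F_q with values in ℂ, let m ≥ 1 be an integer, and let a, b ∈ F_q with a ≠ 0 and b ≠ 0. Then S_m(a,b) = Σ_χ χ((−a)^m / b) · G(χ̄^m, ψ) · G(χ,ψ)^m, where S_m(a,b) = Σ_{v ∈ F_q*} ψ(−a v) Σ_χ χ̄(b v^m) G(χ,ψ)^m, the sums over χ run over all multiplicative characters of F_q*, and G(χ,ψ) = Σ_{x ∈ F_q*} ψ(x) χ(x). -/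
/-! After exchanging the two sums, the term of χ is χ̄(b) G(χ,ψ)^m Σ_v ψ(-a v) χ̄^m(v), and the
inner sum is the Gauss sum of χ̄^m for the shifted character x ↦ ψ(-a x), i.e. χ(-a)^m G(χ̄^m, ψ). -/

open Finset

namespace MulChar

theorem sum_units_mul {R R' : Type*} [CommMonoid R] [Fintype R] [Fintype Rˣ] [CommSemiring R']
    (χ : MulChar R R') (f : R → R') :
    ∑ u : Rˣ, χ u * f u = ∑ x, χ x * f x := by
  refine (sum_map univ ⟨((↑) : Rˣ → R), Units.val_injective⟩ fun x ↦ χ x * f x).symm.trans <|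
    sum_subset (subset_univ _) fun x _ hx ↦ ?_
  have hx : ¬ IsUnit x := fun h ↦ hx (mem_map.2 ⟨h.unit, mem_univ _, rfl⟩)
  rw [χ.map_nonunit hx, zero_mul]

end MulChar

theorem sum_units_addChar_mul_mulChar_inv_mul_pow {F R : Type*} [Field F] [Fintype F]
    [Fintype Fˣ] [CommRing R] (χ : MulChar F R) (ψ : AddChar F R) (m : ℕ) {c : F}
    (hc : c ≠ 0) (b : F) :
    ∑ v : Fˣ, ψ (c * v) * χ⁻¹ (b * (v : F) ^ m) = χ (c ^ m / b) * gaussSum (χ⁻¹ ^ m) ψ := by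
  set u := Units.mk0 c hc
  calc ∑ v : Fˣ, ψ (c * v) * χ⁻¹ (b * (v : F) ^ m)
      = χ⁻¹ b * ∑ v : Fˣ, (χ⁻¹ ^ m) v * ψ.mulShift c v := by
        rw [mul_sum]
        refine sum_congr rfl fun v _ ↦ ?_
        rw [map_mul χ⁻¹, map_pow, ← MulChar.pow_apply_coe, AddChar.mulShift_apply]
        ring
    _ = χ⁻¹ b * ((χ⁻¹ ^ m)⁻¹ u * gaussSum (χ⁻¹ ^ m) ψ) := by
        rw [MulChar.sum_units_mul, ← gaussSum_mulShift_eq]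
        rfl
    _ = χ (c ^ m / b) * gaussSum (χ⁻¹ ^ m) ψ := by
        rw [inv_pow, inv_inv, MulChar.pow_apply_coe, div_eq_mul_inv, map_mul, map_pow,
          ← MulChar.inv_apply', Units.val_mk0]
        ring

open Classical in
theorem stmt_18_general (F : Type) [Field F] [Fintype F]
    [Fintype (MulChar F ℂ)]
    (ψ : AddChar F ℂ)
    (m : ℕ) (a b : F) (ha : a ≠ 0)
    (S : ℂ)
    (hS : S = ∑ v : Fˣ, ψ (-a * v) *
        ∑ χ : MulChar F ℂ, χ⁻¹ (b * (v : F) ^ m) * (gaussSum χ ψ) ^ m) :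
    S = ∑ χ : MulChar F ℂ,
        χ ((-a) ^ m / b) * gaussSum (χ⁻¹ ^ m) ψ * (gaussSum χ ψ) ^ m := by
  calc S = ∑ χ : MulChar F ℂ,
        (∑ v : Fˣ, ψ (-a * v) * χ⁻¹ (b * (v : F) ^ m)) * gaussSum χ ψ ^ m := by
        simp_rw [hS, mul_sum, sum_mul, mul_assoc]
        exact sum_comm
    _ = _ := by
        simp_rw [sum_units_addChar_mul_mulChar_inv_mul_pow _ _ _ (neg_ne_zero.2 ha)]

open Classical in
theorem stmt_18 (q : ℕ) (F : Type) [Field F] [Fintype F] (hF : Fintype.card F = q)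
    [Fintype (MulChar F ℂ)]
    (ψ : AddChar F ℂ) (hψ : ∃ c, ψ c ≠ 1)
    (m : ℕ) (hm : 1 ≤ m) (a b : F) (ha : a ≠ 0) (hb : b ≠ 0)
    (S : ℂ)
    (hS : S = ∑ v : Fˣ, ψ (-a * v) *
        ∑ χ : MulChar F ℂ, χ⁻¹ (b * (v : F) ^ m) * (gaussSum χ ψ) ^ m) :
    S = ∑ χ : MulChar F ℂ,
        χ ((-a) ^ m / b) * gaussSum (χ⁻¹ ^ m) ψ * (gaussSum χ ψ) ^ m :=
  stmt_18_general F ψ m a b ha S hS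
end
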